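/- Let D be a k×k Metzler matrix, c > 0, μ < 0, with positive right eigenvector ξ (D ξ = μ ξ) and positive left eigenvector η (ηᵀ D = μ ηᵀ) normalized so that (ξ, η) = 1; let P be the matrix with entries P_{ij} = ξ_i η_j, and assume e^{(D − μ I)s} → P as s → ∞. Let u : [0,∞) → ℝ^k be a nonnegative solution of the cumulant system with u_0 = λ ≥ 0, and let v : [0,∞) → ℝ^k be a differentiable solution of the linearized system dv_t/dt = D v_t − c · u_t ⊙ v_t with v_0 = ξ. Then e^{−μ t} v_t converges as t → ∞ to a limit of the form κ ξ with κ > 0. -/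

import Mathlib

/-!
Rescale `w t = exp (-μ t) • v t`, so that `w' = (D - μ I) w - (c u) ⊙ w`. Quasi-positivity of
linear systems with Metzler coefficients makes `v` positive. Pairing with the left eigenvector
`η` shows that `⟪η, u t⟫ exp (-μ t)` and `h t = ⟪η, w t⟫` are nonincreasing; the first gives
`‖u t‖ = O(exp (μ t))`, hence `h' ≥ -C exp (μ t) h`, so `h` stays above `h 0 * exp (C / μ) > 0`
and converges to some `κ > 0`. Finally `w` is bounded and its forcing is `O(exp (μ t))`, so
Duhamel's formula on `[s, t]` gives `w t ≈ exp ((t - s) (D - μ I)) w s ≈ P w s = h s • ξ`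
up to errors vanishing as `t - s → ∞` and `s → ∞`; hence `w t → κ • ξ`.
-/

open Filter Topology Set Matrix

theorem hasDerivAt_neg_mul (μ t : ℝ) : HasDerivAt (fun s => -(μ * s)) (-μ) t := by
  simpa using ((hasDerivAt_id t).const_mul μ).fun_neg

theorem hasDerivAt_mul_exp {f φ : ℝ → ℝ} {f' φ' t : ℝ} (hf : HasDerivAt f f' t)
    (hφ : HasDerivAt φ φ' t) :
    HasDerivAt (fun s => f s * Real.exp (φ s)) ((f' + φ' * f t) * Real.exp (φ t)) t :=
  (hf.mul hφ.exp).congr_deriv (by ring)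

theorem monotoneOn_mul_exp {s : Set ℝ} (hs : Convex ℝ s) {f f' φ φ' : ℝ → ℝ}
    (hf : ∀ t ∈ s, HasDerivAt f (f' t) t) (hφ : ∀ t ∈ s, HasDerivAt φ (φ' t) t)
    (h : ∀ t ∈ interior s, 0 ≤ f' t + φ' t * f t) :
    MonotoneOn (fun t => f t * Real.exp (φ t)) s := by
  have hd := fun t ht => hasDerivAt_mul_exp (hf t ht) (hφ t ht)
  exact monotoneOn_of_hasDerivWithinAt_nonneg hs
    (fun t ht => (hd t ht).continuousAt.continuousWithinAt)
    (fun t ht => (hd t (interior_subset ht)).hasDerivWithinAt)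
    (fun t ht => mul_nonneg (h t ht) (Real.exp_pos _).le)

theorem antitoneOn_mul_exp {s : Set ℝ} (hs : Convex ℝ s) {f f' φ φ' : ℝ → ℝ}
    (hf : ∀ t ∈ s, HasDerivAt f (f' t) t) (hφ : ∀ t ∈ s, HasDerivAt φ (φ' t) t)
    (h : ∀ t ∈ interior s, f' t + φ' t * f t ≤ 0) :
    AntitoneOn (fun t => f t * Real.exp (φ t)) s := by
  have hd := fun t ht => hasDerivAt_mul_exp (hf t ht) (hφ t ht)
  exact antitoneOn_of_hasDerivWithinAt_nonpos hs
    (fun t ht => (hd t ht).continuousAt.continuousWithinAt)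
    (fun t ht => (hd t (interior_subset ht)).hasDerivWithinAt)
    (fun t ht => mul_nonpos_of_nonpos_of_nonneg (h t ht) (Real.exp_pos _).le)

theorem antitoneOn_mul_exp_neg_mul {f f' : ℝ → ℝ} {μ : ℝ}
    (hf : ∀ t ∈ Ici (0 : ℝ), HasDerivAt f (f' t) t) (h : ∀ t ∈ Ici (0 : ℝ), f' t ≤ μ * f t) :
    AntitoneOn (fun t => f t * Real.exp (-(μ * t))) (Ici 0) :=
  antitoneOn_mul_exp (convex_Ici 0) hf (fun t _ => hasDerivAt_neg_mul μ t)
    (fun t ht => by linarith [h t (interior_subset ht)])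

theorem le_mul_exp_neg_mul {f f' : ℝ → ℝ} {μ β : ℝ} (hμ : μ < 0) (hβ : 0 ≤ β)
    (hf : ∀ t ∈ Ici (0 : ℝ), HasDerivAt f (f' t) t) (hf0 : 0 ≤ f 0)
    (h : ∀ t ∈ Ici (0 : ℝ), (μ - β * Real.exp (μ * t)) * f t ≤ f' t) :
    ∀ t ∈ Ici (0 : ℝ), f 0 * Real.exp (β / μ) ≤ f t * Real.exp (-(μ * t)) := by
  intro t ht
  set a := β / μ
  have hφ : ∀ s, HasDerivAt (fun s => -(μ * s) + a * Real.exp (μ * s))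
      (-μ + β * Real.exp (μ * s)) s := fun s =>
    ((hasDerivAt_neg_mul μ s).fun_add (((hasDerivAt_id s).const_mul μ).exp.const_mul a)).congr_deriv
      (by simp only [a, id]; field_simp [hμ.ne])
  have key := monotoneOn_mul_exp (convex_Ici 0) hf (fun s _ => hφ s)
    (fun s hs => by linarith [h s (interior_subset hs)]) self_mem_Ici ht ht
  simp only [mul_zero, neg_zero, Real.exp_zero, zero_add, mul_one, Real.exp_add] at key
  have haE : a * Real.exp (μ * t) ≤ 0 :=
    mul_nonpos_of_nonpos_of_nonneg (div_nonpos_of_nonneg_of_nonpos hβ hμ.le) (Real.exp_pos _).le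
  calc f 0 * Real.exp a ≤ f 0 * Real.exp a * Real.exp (-(a * Real.exp (μ * t))) :=
        le_mul_of_one_le_right (by positivity) (Real.one_le_exp (by linarith))
    _ ≤ f t * Real.exp (-(μ * t)) * Real.exp (a * Real.exp (μ * t))
          * Real.exp (-(a * Real.exp (μ * t))) :=
          mul_le_mul_of_nonneg_right (key.trans_eq (by ring)) (Real.exp_pos _).le
    _ = f t * Real.exp (-(μ * t)) := by rw [mul_assoc, ← Real.exp_add]; simp

theorem exists_tendsto_of_antitoneOn_Ici {f : ℝ → ℝ} {m a : ℝ} (hf : AntitoneOn f (Ici a))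
    (hm : ∀ t ∈ Ici a, m ≤ f t) : ∃ κ, m ≤ κ ∧ Tendsto f atTop (𝓝 κ) := by
  have hanti : Antitone fun t => f (max t a) := fun s t hst =>
    hf (le_max_right s a) (le_max_right t a) (max_le_max_right a hst)
  refine ⟨⨅ t, f (max t a), le_ciInf fun t => hm _ (le_max_right t a),
    (tendsto_atTop_ciInf hanti ⟨m, ?_⟩).congr' ?_⟩
  · rintro _ ⟨t, rfl⟩
    exact hm _ (le_max_right t a)
  · filter_upwards [eventually_ge_atTop a] with t ht
    rw [max_eq_left ht]

theorem tendsto_of_norm_sub_le_add {E : Type*} [SeminormedAddCommGroup E] {f : ℝ → E} {L : E}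
    {a b : ℝ → ℝ} (ha : Tendsto a atTop (𝓝 0)) (hb : Tendsto b atTop (𝓝 0))
    (h : ∀ s t, 0 ≤ s → s ≤ t → ‖f t - L‖ ≤ a (t - s) + b s) : Tendsto f atTop (𝓝 L) := by
  refine Metric.tendsto_atTop.2 fun ε hε => ?_
  obtain ⟨s, hbs, hs⟩ := ((hb.eventually (gt_mem_nhds (half_pos hε))).and
    (eventually_ge_atTop 0)).exists
  obtain ⟨N, hN⟩ := eventually_atTop.1 (ha.eventually (gt_mem_nhds (half_pos hε)))
  refine ⟨s + max N 0, fun t ht => ?_⟩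
  have hst : s ≤ t := by linarith [le_max_right N 0]
  have := hN (t - s) (by linarith [le_max_left N 0])
  rw [dist_eq_norm]
  linarith [h s t hs hst]

theorem exists_norm_le_of_tendsto_atTop {E : Type*} [SeminormedAddCommGroup E] {f : ℝ → E} {L : E}
    (hf : Continuous f) (hL : Tendsto f atTop (𝓝 L)) (a : ℝ) : ∃ C, ∀ s ∈ Ici a, ‖f s‖ ≤ C := by
  obtain ⟨N, hN⟩ := eventually_atTop.1 (hL.norm.eventually (gt_mem_nhds (lt_add_one ‖L‖)))
  obtain ⟨C, hC⟩ := (isCompact_Icc (a := a) (b := N)).exists_bound_of_continuousOn hf.continuousOn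
  refine ⟨max C (‖L‖ + 1), fun s hs => ?_⟩
  rcases le_total s N with hsN | hNs
  · exact (hC s ⟨hs, hsN⟩).trans (le_max_left _ _)
  · exact (hN s hNs).le.trans (le_max_right _ _)

variable {ι : Type*} [Fintype ι]

theorem HasDerivAt.const_dotProduct {x : ℝ → ι → ℝ} {x' : ι → ℝ} {t : ℝ} (η : ι → ℝ)
    (hx : HasDerivAt x x' t) : HasDerivAt (fun s => η ⬝ᵥ x s) (η ⬝ᵥ x') t :=
  HasDerivAt.fun_sum fun i _ => (hasDerivAt_pi.1 hx i).const_mul (η i)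

theorem hasDerivAt_dotProduct_of_vecMul_eq {D : Matrix ι ι ℝ} {η : ι → ℝ} {μ : ℝ}
    (hη : η ᵥ* D = μ • η) {x : ℝ → ι → ℝ} {y : ι → ℝ} {t : ℝ}
    (hx : HasDerivAt x (D *ᵥ x t - y) t) :
    HasDerivAt (fun s => η ⬝ᵥ x s) (μ * (η ⬝ᵥ x t) - η ⬝ᵥ y) t := by
  convert hx.const_dotProduct η using 1
  rw [dotProduct_sub, dotProduct_mulVec, hη, smul_dotProduct, smul_eq_mul]

theorem norm_le_sum_inv_mul_dotProduct {η x : ι → ℝ} (hη : ∀ i, 0 < η i) (hx : 0 ≤ x) :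
    ‖x‖ ≤ (∑ i, (η i)⁻¹) * (η ⬝ᵥ x) := by
  have hηx : 0 ≤ η ⬝ᵥ x := dotProduct_nonneg_of_nonneg (fun i => (hη i).le) hx
  refine (pi_norm_le_iff_of_nonneg (mul_nonneg (Finset.sum_nonneg fun i _ =>
    (inv_pos.2 (hη i)).le) hηx)).2 fun i => ?_
  have hi : η i * x i ≤ η ⬝ᵥ x :=
    Finset.single_le_sum (f := fun j => η j * x j) (fun j _ => mul_nonneg (hη j).le (hx j))
      (Finset.mem_univ i)
  calc ‖x i‖ = x i := Real.norm_of_nonneg (hx i)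
    _ ≤ (η i)⁻¹ * (η ⬝ᵥ x) := by rw [le_inv_mul_iff₀ (hη i)]; exact hi
    _ ≤ (∑ i, (η i)⁻¹) * (η ⬝ᵥ x) := by
      gcongr
      exact Finset.single_le_sum (fun j _ => (inv_pos.2 (hη j)).le) (Finset.mem_univ i)

theorem dotProduct_mul_le_norm_mul {η w : ι → ℝ} (hη : 0 ≤ η) (u : ι → ℝ) (hw : 0 ≤ w) :
    η ⬝ᵥ (u * w) ≤ ‖u‖ * (η ⬝ᵥ w) := by
  rw [dotProduct, dotProduct, Finset.mul_sum]
  refine Finset.sum_le_sum fun i _ => ?_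
  calc η i * (u * w) i = u i * (η i * w i) := by simp only [Pi.mul_apply]; ring
    _ ≤ ‖u‖ * (η i * w i) := mul_le_mul_of_nonneg_right
      ((le_abs_self _).trans (norm_le_pi_norm u i)) (mul_nonneg (hη i) (hw i))

section LeftEigenvector

variable {D : Matrix ι ι ℝ} {η : ι → ℝ} {μ : ℝ} {a v : ℝ → ι → ℝ}

theorem antitoneOn_dotProduct_mul_exp_neg_mul (hleft : η ᵥ* D = μ • η) (hη : 0 ≤ η)
    (ha : ∀ t ∈ Ici (0 : ℝ), 0 ≤ a t)
    (hv : ∀ t ∈ Ici (0 : ℝ), HasDerivAt v (D *ᵥ v t - a t * v t) t)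
    (hv0 : ∀ t ∈ Ici (0 : ℝ), 0 ≤ v t) :
    AntitoneOn (fun t => (η ⬝ᵥ v t) * Real.exp (-(μ * t))) (Ici 0) :=
  antitoneOn_mul_exp_neg_mul (fun t ht => hasDerivAt_dotProduct_of_vecMul_eq hleft (hv t ht))
    fun t ht => sub_le_self _ (dotProduct_nonneg_of_nonneg hη (mul_nonneg (ha t ht) (hv0 t ht)))

theorem norm_exp_neg_mul_smul_le (hleft : η ᵥ* D = μ • η) (hη : ∀ i, 0 < η i)
    (ha : ∀ t ∈ Ici (0 : ℝ), 0 ≤ a t)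
    (hv : ∀ t ∈ Ici (0 : ℝ), HasDerivAt v (D *ᵥ v t - a t * v t) t)
    (hv0 : ∀ t ∈ Ici (0 : ℝ), 0 ≤ v t) :
    ∀ t ∈ Ici (0 : ℝ), ‖Real.exp (-(μ * t)) • v t‖ ≤ (∑ i, (η i)⁻¹) * (η ⬝ᵥ v 0) := by
  intro t ht
  have hdecay := antitoneOn_dotProduct_mul_exp_neg_mul hleft (fun i => (hη i).le) ha hv hv0
    self_mem_Ici ht ht
  simp only [mul_zero, neg_zero, Real.exp_zero, mul_one] at hdecay
  refine (norm_le_sum_inv_mul_dotProduct hη (smul_nonneg (Real.exp_pos _).le (hv0 t ht))).trans ?_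
  rw [dotProduct_smul, smul_eq_mul, mul_comm (Real.exp _)]
  gcongr
  exact Finset.sum_nonneg fun i _ => (inv_pos.2 (hη i)).le

theorem norm_le_mul_exp_of_hasDerivAt (hleft : η ᵥ* D = μ • η) (hη : ∀ i, 0 < η i)
    (ha : ∀ t ∈ Ici (0 : ℝ), 0 ≤ a t)
    (hv : ∀ t ∈ Ici (0 : ℝ), HasDerivAt v (D *ᵥ v t - a t * v t) t)
    (hv0 : ∀ t ∈ Ici (0 : ℝ), 0 ≤ v t) :
    ∀ t ∈ Ici (0 : ℝ), ‖v t‖ ≤ (∑ i, (η i)⁻¹) * (η ⬝ᵥ v 0) * Real.exp (μ * t) := by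
  intro t ht
  have h := norm_exp_neg_mul_smul_le hleft hη ha hv hv0 t ht
  rw [norm_smul, Real.norm_of_nonneg (Real.exp_pos _).le] at h
  calc ‖v t‖ = Real.exp (-(μ * t)) * ‖v t‖ * Real.exp (μ * t) := by
        rw [mul_comm, ← mul_assoc, ← Real.exp_add]; simp
    _ ≤ _ := by gcongr

theorem exists_tendsto_dotProduct_mul_exp_neg_mul (hleft : η ᵥ* D = μ • η) (hη : 0 ≤ η)
    (hμ : μ < 0) {β : ℝ} (ha : ∀ t ∈ Ici (0 : ℝ), 0 ≤ a t)
    (haβ : ∀ t ∈ Ici (0 : ℝ), ‖a t‖ ≤ β * Real.exp (μ * t))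
    (hv : ∀ t ∈ Ici (0 : ℝ), HasDerivAt v (D *ᵥ v t - a t * v t) t)
    (hv0 : ∀ t ∈ Ici (0 : ℝ), 0 ≤ v t) :
    ∃ κ, (η ⬝ᵥ v 0) * Real.exp (β / μ) ≤ κ ∧
      Tendsto (fun t => (η ⬝ᵥ v t) * Real.exp (-(μ * t))) atTop (𝓝 κ) := by
  have hβ : 0 ≤ β := by simpa using (norm_nonneg _).trans (haβ 0 self_mem_Ici)
  refine exists_tendsto_of_antitoneOn_Ici (antitoneOn_dotProduct_mul_exp_neg_mul hleft hη ha hv hv0)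
    (le_mul_exp_neg_mul hμ hβ (fun t ht => hasDerivAt_dotProduct_of_vecMul_eq hleft (hv t ht))
      (dotProduct_nonneg_of_nonneg hη (hv0 0 self_mem_Ici)) fun t ht => ?_)
  have := (dotProduct_mul_le_norm_mul hη (a t) (hv0 t ht)).trans
    (mul_le_mul_of_nonneg_right (haβ t ht) (dotProduct_nonneg_of_nonneg hη (hv0 t ht)))
  linarith

end LeftEigenvector

variable [DecidableEq ι]

theorem diag_mul_le_mulVec_apply {A : Matrix ι ι ℝ} (hA : ∀ i j, i ≠ j → 0 ≤ A i j)
    {x : ι → ℝ} (hx : ∀ i, 0 ≤ x i) (i : ι) : A i i * x i ≤ (A *ᵥ x) i := by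
  rw [mulVec, dotProduct, ← Finset.add_sum_erase _ _ (Finset.mem_univ i)]
  exact le_add_of_nonneg_right <| Finset.sum_nonneg fun j hj =>
    mul_nonneg (hA i j (Finset.ne_of_mem_erase hj).symm) (hx j)

theorem pos_of_hasDerivAt_mulVec_of_metzler {A : ℝ → Matrix ι ι ℝ} {v : ℝ → ι → ℝ}
    (hA : ∀ t ∈ Ici (0 : ℝ), ∀ i j, i ≠ j → 0 ≤ A t i j)
    (hAc : ∀ i, ContinuousOn (fun t => A t i i) (Ici 0))
    (hv : ∀ t ∈ Ici (0 : ℝ), HasDerivAt v (A t *ᵥ v t) t) (hv0 : ∀ i, 0 < v 0 i) :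
    ∀ t ∈ Ici (0 : ℝ), ∀ i, 0 < v t i := by
  by_contra! hneg
  obtain ⟨t₀, ht₀, i₀, hi₀⟩ := hneg
  set S := ⋃ i, Ici 0 ∩ (fun t => v t i) ⁻¹' Iic 0
  have hS : IsClosed S := isClosed_iUnion_of_finite fun i =>
    (continuousOn_pi.1 (fun t ht => (hv t ht).continuousAt.continuousWithinAt) i
      ).preimage_isClosed_of_isClosed isClosed_Ici isClosed_Iic
  have hbdd : BddBelow S := ⟨0, fun t ht => (mem_iUnion.1 ht).choose_spec.1⟩
  -- `T` is the first time at which some coordinate of `v` is nonpositive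
  set T := sInf S
  obtain ⟨i, hT, hvT⟩ := mem_iUnion.1 (hS.csInf_mem ⟨t₀, mem_iUnion.2 ⟨i₀, ht₀, hi₀⟩⟩ hbdd)
  have hpos : ∀ r ∈ Ico 0 T, ∀ j, 0 < v r j := fun r hr j => by
    by_contra! h
    exact (csInf_le hbdd (mem_iUnion.2 ⟨j, hr.1, h⟩)).not_gt hr.2
  obtain ⟨K, hK⟩ := isCompact_Icc.exists_bound_of_continuousOn
    ((hAc i).mono (Icc_subset_Ici_self : Icc 0 T ⊆ _))
  have hmono : MonotoneOn (fun t => v t i * Real.exp (t * K)) (Icc 0 T) :=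
    monotoneOn_mul_exp (convex_Icc 0 T) (fun r hr => hasDerivAt_pi.1 (hv r hr.1) i)
      (fun r _ => hasDerivAt_mul_const K) fun r hr => by
        rw [interior_Icc] at hr
        have hvr := hpos r (Ioo_subset_Ico_self hr)
        nlinarith [diag_mul_le_mulVec_apply (hA r hr.1.le) (fun j => (hvr j).le) i,
          neg_le_of_abs_le (hK r (Ioo_subset_Icc_self hr)), hvr i]
  have h0T := hmono (left_mem_Icc.2 hT) (right_mem_Icc.2 hT) hT
  simp only [zero_mul, Real.exp_zero, mul_one] at h0T
  exact (hv0 i).not_ge (h0T.trans (mul_nonpos_of_nonpos_of_nonneg hvT (Real.exp_pos _).le))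

theorem pos_of_hasDerivAt_mulVec_sub_mul {D : Matrix ι ι ℝ}
    (hD : ∀ i j, i ≠ j → 0 ≤ D i j) {a v : ℝ → ι → ℝ}
    (ha : ContinuousOn a (Ici 0))
    (hv : ∀ t ∈ Ici (0 : ℝ), HasDerivAt v (D *ᵥ v t - a t * v t) t) (hv0 : ∀ i, 0 < v 0 i) :
    ∀ t ∈ Ici (0 : ℝ), ∀ i, 0 < v t i := by
  refine pos_of_hasDerivAt_mulVec_of_metzler (A := fun t => D - diagonal (a t))
    (fun t _ i j hij => by simpa [diagonal_apply_ne _ hij] using hD i j hij)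
    (fun i => by simpa using continuousOn_const.fun_sub (continuousOn_pi.1 ha i))
    (fun t ht => ?_) hv0
  convert hv t ht using 1
  ext i
  simp [sub_mulVec, mulVec_diagonal]

theorem HasDerivAt.exp_neg_mul_smul {D : Matrix ι ι ℝ} {μ t : ℝ} {a : ι → ℝ} {v : ℝ → ι → ℝ}
    (hv : HasDerivAt v (D *ᵥ v t - a * v t) t) :
    HasDerivAt (fun s => Real.exp (-(μ * s)) • v s)
      ((D - μ • 1) *ᵥ (Real.exp (-(μ * t)) • v t) - a * (Real.exp (-(μ * t)) • v t)) t := by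
  refine ((hasDerivAt_neg_mul μ t).exp.smul hv).congr_deriv ?_
  rw [sub_mulVec, smul_mulVec, one_mulVec, mulVec_smul, mul_smul_comm]
  module

section MatrixExp

attribute [local instance] Matrix.linftyOpNormedAddCommGroup Matrix.linftyOpNormedRing
  Matrix.linftyOpNormedAlgebra

theorem hasDerivAt_exp_sub_smul_mulVec (B : Matrix ι ι ℝ) {w : ℝ → ι → ℝ} {w' : ι → ℝ} {r : ℝ}
    (t : ℝ) (hw : HasDerivAt w w' r) :
    HasDerivAt (fun r => NormedSpace.exp ((t - r) • B) *ᵥ w r)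
      (NormedSpace.exp ((t - r) • B) *ᵥ (w' - B *ᵥ w r)) r := by
  have hE : HasDerivAt (fun r => NormedSpace.exp ((t - r) • B))
      ((-1 : ℝ) • (NormedSpace.exp ((t - r) • B) * B)) r :=
    (hasDerivAt_exp_smul_const B (t - r)).scomp r ((hasDerivAt_id r).const_sub t)
  refine ((mulVecBilin ℝ ℝ).toContinuousBilinearMap.hasDerivAt_of_bilinear
    (fun _ => hE) (fun _ => hw)).congr_deriv ?_
  simp only [LinearMap.toContinuousBilinearMap_apply, mulVecBilin_apply, neg_one_smul,
    neg_mulVec, ← mulVec_mulVec, mulVec_add, mulVec_neg, sub_eq_add_neg]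

theorem norm_sub_exp_smul_mulVec_le (B : Matrix ι ι ℝ) {w g : ℝ → ι → ℝ} {φ φ' : ℝ → ℝ}
    {s t C : ℝ} (hst : s ≤ t) (hw : ∀ r ∈ Icc s t, HasDerivAt w (B *ᵥ w r + g r) r)
    (hφ : ∀ r, HasDerivAt φ (φ' r) r) (hg : ∀ r ∈ Icc s t, ‖g r‖ ≤ φ' r)
    (hE : ∀ r ∈ Icc 0 (t - s), ‖NormedSpace.exp (r • B)‖ ≤ C) :
    ‖w t - NormedSpace.exp ((t - s) • B) *ᵥ w s‖ ≤ C * (φ t - φ s) := by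
  have hd := fun r hr => hasDerivAt_exp_sub_smul_mulVec B t (hw r hr)
  have hC : 0 ≤ C := (norm_nonneg _).trans (hE 0 ⟨le_rfl, sub_nonneg.2 hst⟩)
  have := image_norm_le_of_norm_deriv_right_le_deriv_boundary
    (f := fun r => NormedSpace.exp ((t - r) • B) *ᵥ w r - NormedSpace.exp ((t - s) • B) *ᵥ w s)
    (B := fun r => C * (φ r - φ s)) (a := s) (b := t)
    (fun r hr => ((hd r hr).sub_const _).continuousAt.continuousWithinAt)
    (fun r hr => ((hd r (Ico_subset_Icc_self hr)).sub_const _).hasDerivWithinAt)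
    (by simp) (fun r => ((hφ r).sub_const (φ s)).const_mul C) (fun r hr => ?_)
    (right_mem_Icc.2 hst)
  · simpa using this
  · have hr' := Ico_subset_Icc_self hr
    simp only [add_sub_cancel_left]
    calc ‖NormedSpace.exp ((t - r) • B) *ᵥ g r‖ ≤ ‖NormedSpace.exp ((t - r) • B)‖ * ‖g r‖ :=
          linfty_opNorm_mulVec _ _
      _ ≤ C * φ' r := mul_le_mul (hE _ ⟨by linarith [hr.2], by linarith [hr.1]⟩) (hg r hr')
          (norm_nonneg _) hC

theorem tendsto_of_hasDerivAt_mulVec_add {B P : Matrix ι ι ℝ}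
    (hB : Tendsto (fun s : ℝ => NormedSpace.exp (s • B)) atTop (𝓝 P))
    {w g : ℝ → ι → ℝ} {L : ι → ℝ} {M μ R : ℝ} (hμ : μ < 0)
    (hw : ∀ t ∈ Ici (0 : ℝ), HasDerivAt w (B *ᵥ w t + g t) t)
    (hg : ∀ t ∈ Ici (0 : ℝ), ‖g t‖ ≤ M * Real.exp (μ * t))
    (hwR : ∀ t ∈ Ici (0 : ℝ), ‖w t‖ ≤ R) (hPw : Tendsto (fun t => P *ᵥ w t) atTop (𝓝 L)) :
    Tendsto w atTop (𝓝 L) := by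
  obtain ⟨C, hC⟩ := exists_norm_le_of_tendsto_atTop
    (NormedSpace.exp_continuous.comp (continuous_id.smul continuous_const)) hB 0
  have hM : 0 ≤ M := by simpa using (norm_nonneg _).trans (hg 0 self_mem_Ici)
  have hC0 : 0 ≤ C := (norm_nonneg _).trans (hC 0 self_mem_Ici)
  have hφ : ∀ r, HasDerivAt (fun r => M * Real.exp (μ * r) / μ) (M * Real.exp (μ * r)) r :=
    fun r => ((((hasDerivAt_id r).const_mul μ).exp.const_mul M).div_const μ).congr_deriv
      (by simp only [id]; field_simp [hμ.ne])
  refine tendsto_of_norm_sub_le_add (a := fun r => ‖NormedSpace.exp (r • B) - P‖ * R)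
    (b := fun s => ‖P *ᵥ w s - L‖ + C * (M * Real.exp (μ * s) / -μ)) ?_ ?_ fun s t hs hst => ?_
  · simpa using ((hB.sub_const P).norm.mul_const R)
  · have hexp : Tendsto (fun s => Real.exp (μ * s)) atTop (𝓝 0) :=
      Real.tendsto_exp_atBot.comp (tendsto_id.const_mul_atTop_of_neg hμ)
    simpa using (hPw.sub_const L).norm.add (((hexp.const_mul M).div_const (-μ)).const_mul C)
  have hDuhamel := norm_sub_exp_smul_mulVec_le B hst (fun r hr => hw r (hs.trans hr.1)) hφ
    (fun r hr => hg r (hs.trans hr.1)) (fun r hr => hC r hr.1)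
  have hdecomp : w t - L = (w t - NormedSpace.exp ((t - s) • B) *ᵥ w s)
      + (NormedSpace.exp ((t - s) • B) - P) *ᵥ w s + (P *ᵥ w s - L) := by
    rw [sub_mulVec]; abel
  have hEP := (linfty_opNorm_mulVec (NormedSpace.exp ((t - s) • B) - P) (w s)).trans
    (mul_le_mul_of_nonneg_left (hwR s hs) (norm_nonneg _))
  have htail : C * (M * Real.exp (μ * t) / μ - M * Real.exp (μ * s) / μ)
      ≤ C * (M * Real.exp (μ * s) / -μ) := by
    have : M * Real.exp (μ * t) / μ ≤ 0 := div_nonpos_of_nonneg_of_nonpos (by positivity) hμ.le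
    gcongr
    rw [div_neg]
    linarith
  rw [hdecomp]
  refine norm_add₃_le.trans ?_
  linarith

theorem tendsto_of_hasDerivAt_mulVec_sub_mul {B P : Matrix ι ι ℝ}
    (hB : Tendsto (fun s : ℝ => NormedSpace.exp (s • B)) atTop (𝓝 P))
    {w a : ℝ → ι → ℝ} {L : ι → ℝ} {M μ R : ℝ} (hμ : μ < 0)
    (hw : ∀ t ∈ Ici (0 : ℝ), HasDerivAt w (B *ᵥ w t - a t * w t) t)
    (ha : ∀ t ∈ Ici (0 : ℝ), ‖a t‖ ≤ M * Real.exp (μ * t))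
    (hwR : ∀ t ∈ Ici (0 : ℝ), ‖w t‖ ≤ R) (hPw : Tendsto (fun t => P *ᵥ w t) atTop (𝓝 L)) :
    Tendsto w atTop (𝓝 L) := by
  refine tendsto_of_hasDerivAt_mulVec_add hB hμ (M := M * R)
    (fun t ht => by simpa only [sub_eq_add_neg] using hw t ht) (fun t ht => ?_) hwR hPw
  rw [norm_neg]
  exact (norm_mul_le _ _).trans ((mul_le_mul (ha t ht) (hwR t ht) (norm_nonneg _)
    ((norm_nonneg _).trans (ha t ht))).trans_eq (by ring))

end MatrixExp

theorem stmt10_general (k : ℕ) (hk : 1 ≤ k) (c : ℝ) (hc : 0 < c)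
    (D : Matrix (Fin k) (Fin k) ℝ)
    (hMetzler : ∀ i j : Fin k, i ≠ j → 0 ≤ D i j)
    (μ : ℝ) (hμ : μ < 0)
    (ξ η : Fin k → ℝ) (hξpos : ∀ i, 0 < ξ i) (hηpos : ∀ i, 0 < η i)
    (hleft : D.vecMul η = μ • η)
    (P : Matrix (Fin k) (Fin k) ℝ) (hP : ∀ i j, P i j = ξ i * η j)
    (hconv : Tendsto
      (fun s : ℝ => NormedSpace.exp (s • (D - μ • (1 : Matrix (Fin k) (Fin k) ℝ))))
      atTop (𝓝 P))
    (u : ℝ → Fin k → ℝ)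
    (husol : ∀ t ∈ Set.Ici (0 : ℝ),
      HasDerivAt u (D.mulVec (u t) - (c / 2) • (u t * u t)) t)
    (hunonneg : ∀ t ∈ Set.Ici (0 : ℝ), ∀ i : Fin k, 0 ≤ u t i)
    (v : ℝ → Fin k → ℝ)
    (hvsol : ∀ t ∈ Set.Ici (0 : ℝ),
      HasDerivAt v (D.mulVec (v t) - c • (u t * v t)) t)
    (hvinit : v 0 = ξ) :
    ∃ κ : ℝ, 0 < κ ∧
      Tendsto (fun t : ℝ => Real.exp (-(μ * t)) • v t) atTop (𝓝 (κ • ξ)) := by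
  have hu : ∀ t ∈ Ici (0 : ℝ), HasDerivAt u (D *ᵥ u t - (c / 2) • u t * u t) t := by
    simpa only [smul_mul_assoc] using husol
  have hv : ∀ t ∈ Ici (0 : ℝ), HasDerivAt v (D *ᵥ v t - c • u t * v t) t := by
    simpa only [smul_mul_assoc] using hvsol
  have hcu : ∀ t ∈ Ici (0 : ℝ), 0 ≤ c • u t := fun t ht => smul_nonneg hc.le (hunonneg t ht)
  have hv0 : ∀ t ∈ Ici (0 : ℝ), 0 ≤ v t := fun t ht i => le_of_lt <|
    pos_of_hasDerivAt_mulVec_sub_mul hMetzler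
      (fun t ht => ((husol t ht).continuousAt.const_smul c).continuousWithinAt)
      hv (hvinit ▸ hξpos) t ht i
  have hcu_decay : ∀ t ∈ Ici (0 : ℝ),
      ‖c • u t‖ ≤ c * ((∑ i, (η i)⁻¹) * (η ⬝ᵥ u 0)) * Real.exp (μ * t) := fun t ht => by
    rw [norm_smul, Real.norm_of_nonneg hc.le, mul_assoc]
    gcongr
    exact norm_le_mul_exp_of_hasDerivAt hleft hηpos
      (fun t ht => smul_nonneg (by positivity) (hunonneg t ht)) hu hunonneg t ht
  obtain ⟨κ, hκ, hlim⟩ := exists_tendsto_dotProduct_mul_exp_neg_mul hleft (fun i => (hηpos i).le)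
    hμ hcu hcu_decay hv hv0
  have hηξ : 0 < η ⬝ᵥ v 0 := hvinit ▸ Finset.sum_pos (fun i _ => mul_pos (hηpos i) (hξpos i))
    (Finset.univ_nonempty_iff.2 ⟨⟨0, hk⟩⟩)
  refine ⟨κ, (mul_pos hηξ (Real.exp_pos _)).trans_le hκ,
    tendsto_of_hasDerivAt_mulVec_sub_mul hconv hμ (fun t ht => (hv t ht).exp_neg_mul_smul)
      hcu_decay (norm_exp_neg_mul_smul_le hleft hηpos hcu hv hv0) ?_⟩
  have hP' : P = vecMulVec ξ η := by ext i j; exact hP i j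
  simp only [hP', vecMulVec_mulVec, op_smul_eq_smul, dotProduct_smul, smul_eq_mul,
    mul_comm (Real.exp _)]
  exact hlim.smul_const ξ

/-- (From the proof of Theorem 3.4 (b) of the paper.) In the subcritical
case `μ < 0`, with positive right/left eigenvectors `ξ, η` of `D`, `(ξ,η) = 1`,
`P = ξ ηᵀ` and `e^{(D−μI)s} → P` as `s → ∞`, if `u` is a nonnegative solution of the
cumulant system and `v` solves the linearized system `dv_t/dt = D v_t − c u_t ⊙ v_t`
with `v_0 = ξ`, then `e^{−μt} v_t` converges as `t → ∞` to `κ ξ` for some `κ > 0`. -/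
theorem stmt10 (k : ℕ) (hk : 1 ≤ k) (c : ℝ) (hc : 0 < c)
    (D : Matrix (Fin k) (Fin k) ℝ)
    (hMetzler : ∀ i j : Fin k, i ≠ j → 0 ≤ D i j)
    (μ : ℝ) (hμ : μ < 0)
    (ξ η : Fin k → ℝ) (hξpos : ∀ i, 0 < ξ i) (hηpos : ∀ i, 0 < η i)
    (hright : D.mulVec ξ = μ • ξ) (hleft : D.vecMul η = μ • η)
    (hnormal : ∑ i, ξ i * η i = 1)
    (P : Matrix (Fin k) (Fin k) ℝ) (hP : ∀ i j, P i j = ξ i * η j)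
    (hconv : Tendsto
      (fun s : ℝ => NormedSpace.exp (s • (D - μ • (1 : Matrix (Fin k) (Fin k) ℝ))))
      atTop (𝓝 P))
    (lam : Fin k → ℝ) (hlam : ∀ i, 0 ≤ lam i)
    (u : ℝ → Fin k → ℝ)
    (husol : ∀ t ∈ Set.Ici (0 : ℝ),
      HasDerivAt u (D.mulVec (u t) - (c / 2) • (u t * u t)) t)
    (hunonneg : ∀ t ∈ Set.Ici (0 : ℝ), ∀ i : Fin k, 0 ≤ u t i)
    (huinit : u 0 = lam)
    (v : ℝ → Fin k → ℝ)
    (hvsol : ∀ t ∈ Set.Ici (0 : ℝ),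
      HasDerivAt v (D.mulVec (v t) - c • (u t * v t)) t)
    (hvinit : v 0 = ξ) :
    ∃ κ : ℝ, 0 < κ ∧
      Tendsto (fun t : ℝ => Real.exp (-(μ * t)) • v t) atTop (𝓝 (κ • ξ)) :=
  stmt10_general k hk c hc D hMetzler μ hμ ξ η hξpos hηpos hleft P hP hconv u husol hunonneg v hvsol
    hvinit
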